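/- arXiv:2204.01217 — 2 statements merged into one kernel-verified Lean document; each statement's English description precedes it below -/
import Mathlib

section
/- Let P* ⊂ ℝ^l be a compact convex polytope with 0 in its interior which is the convex hull of its lattice points, P* = conv(P* ∩ ℤ^l), and let g : P* → ℝ be continuous. Set u_P(y) := log Σ_{a ∈ P* ∩ ℤ^l} e^{⟨a,y⟩}. Let φ : P* → ℝ be a piecewise linear convex function, let R ∈ ℝ, and for t ≥ 0 let u_t(y) := sup_{z ∈ P*}( ⟨y,z⟩ − u_P*(z) − t(φ(z) − R) ), where u_P* is the Legendre dual of u_P. Then lim_{t → ∞} (1/t) ∫_{P*} u_t*(z) g(z) dz = ∫_{P*} (φ(z) − R) g(z) dz, where u_t* denotes the Legendre dual of u_t. -/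
open MeasureTheory Real Set Filter

set_option maxHeartbeats 1000000

noncomputable section

variable {l : ℕ}

/-- The standard pairing `⟨y,z⟩ = ∑ i, y i * z i` on `ℝ^l`. -/
def dotp (y z : Fin l → ℝ) : ℝ := ∑ i, y i * z i

/-- The Legendre dual `u*(z) = sup_y (⟨y,z⟩ − u(y))` (as a real-valued supremum). -/
def legendre (u : (Fin l → ℝ) → ℝ) (z : Fin l → ℝ) : ℝ :=
  ⨆ y : Fin l → ℝ, (dotp y z - u y)

/-- The support function `v_S(y) = sup_{z ∈ S} ⟨y,z⟩`. -/
def suppFn (S : Set (Fin l → ℝ)) (y : Fin l → ℝ) : ℝ :=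
  ⨆ z : S, dotp y (z : Fin l → ℝ)

/-- `u ∈ E¹(S)`: `u` is convex on `ℝ^l`, `u ≤ v_S + C` for some constant `C`, and
`∫_S u* dz < ∞`. -/
def InE1 (S : Set (Fin l → ℝ)) (u : (Fin l → ℝ) → ℝ) : Prop :=
  ConvexOn ℝ Set.univ u ∧ (∃ C : ℝ, ∀ y, u y ≤ suppFn S y + C) ∧
    MeasureTheory.IntegrableOn (legendre u) S MeasureTheory.volume

/-- The reduced J-functional
`J_ρ(u) = inf_ℓ { (1/|S|_ρ) ∫_S (u* − ℓ) ρ dz − inf_S (u* − ℓ) }`,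
the infimum over all affine functions `ℓ(z) = ⟨a,z⟩ + b`. -/
def Jred (S : Set (Fin l → ℝ)) (ρ u : (Fin l → ℝ) → ℝ) : ℝ :=
  ⨅ ab : (Fin l → ℝ) × ℝ,
    ((∫ z in S, ρ z)⁻¹ * (∫ z in S, (legendre u z - (dotp ab.1 z + ab.2)) * ρ z)
      - sInf ((fun z => legendre u z - (dotp ab.1 z + ab.2)) '' S))

/-- The Ding functional
`D_g(u) = (1/|S|_g) ∫_S u* g dz − log ∫_{ℝ^l} e^{−u} dy`. -/
def Ding (S : Set (Fin l → ℝ)) (g u : (Fin l → ℝ) → ℝ) : ℝ :=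
  (∫ z in S, g z)⁻¹ * (∫ z in S, legendre u z * g z)
    - Real.log (∫ y : Fin l → ℝ, Real.exp (-(u y)))

/-- The Ding invariant `𝔇_g(φ) = (1/|S|_g) ∫_S φ g dz − φ(0)` of a convex function `φ` on `S`. -/
def DingInv (S : Set (Fin l → ℝ)) (g φ : (Fin l → ℝ) → ℝ) : ℝ :=
  (∫ z in S, g z)⁻¹ * (∫ z in S, φ z * g z) - φ 0

/-- `φ` is, on `S`, a maximum of finitely many affine functions. -/
def IsPLConvexOn (S : Set (Fin l → ℝ)) (φ : (Fin l → ℝ) → ℝ) : Prop :=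
  ∃ (F : Finset ((Fin l → ℝ) × ℝ)) (hF : F.Nonempty),
    ∀ z ∈ S, φ z = F.sup' hF (fun p => dotp p.1 z + p.2)

/-- `u_P(y) = log ∑_{a ∈ A} e^{⟨a,y⟩}`, summing over the lattice points `A` of `P*`. -/
def uPfun (A : Finset (Fin l → ℝ)) (y : Fin l → ℝ) : ℝ :=
  Real.log (∑ a ∈ A, Real.exp (dotp a y))

/-- The toric geodesic ray
`u_t(y) = sup_{z ∈ S} ( ⟨y,z⟩ − u_P*(z) − t(φ(z) − R) )`. -/
def geodesicRay (S : Set (Fin l → ℝ)) (A : Finset (Fin l → ℝ))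
    (φ : (Fin l → ℝ) → ℝ) (R t : ℝ) (y : Fin l → ℝ) : ℝ :=
  ⨆ z : S, (dotp y (z : Fin l → ℝ) - legendre (uPfun A) (z : Fin l → ℝ)
    - t * (φ (z : Fin l → ℝ) - R))

/-! ### Auxiliary lemmas -/

lemma dotp_comm' (y z : Fin l → ℝ) : dotp y z = dotp z y :=
  Finset.sum_congr rfl fun i _ => mul_comm _ _

lemma dotp_lin (y z w : Fin l → ℝ) (a b : ℝ) :
    dotp y (a • z + b • w) = a * dotp y z + b * dotp y w := by
  unfold dotp
  rw [Finset.mul_sum, Finset.mul_sum, ← Finset.sum_add_distrib]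
  refine Finset.sum_congr rfl fun i _ => ?_
  simp only [Pi.add_apply, Pi.smul_apply, smul_eq_mul]
  ring

lemma dotp_smul' (c : ℝ) (y w : Fin l → ℝ) : dotp (c • y) w = c * dotp y w := by
  unfold dotp
  rw [Finset.mul_sum]
  refine Finset.sum_congr rfl fun i _ => ?_
  simp only [Pi.smul_apply, smul_eq_mul]
  ring

lemma continuous_dotp (y : Fin l → ℝ) : Continuous fun z : Fin l → ℝ => dotp y z := by
  unfold dotp
  exact continuous_finset_sum _ fun i _ => continuous_const.mul (continuous_apply i)

lemma clm_fst_eq_dotp (L : ((Fin l → ℝ) × ℝ) →L[ℝ] ℝ) (w : Fin l → ℝ) :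
    L (w, 0) = dotp (fun i => L (Pi.single i 1, 0)) w := by
  have hw : ((w, (0:ℝ)) : (Fin l → ℝ) × ℝ)
      = ∑ i, w i • ((Pi.single i 1 : Fin l → ℝ), (0:ℝ)) := by
    rw [Prod.ext_iff]
    constructor
    · rw [Prod.fst_sum]
      funext j
      simp [Finset.sum_apply, Pi.single_apply, mul_ite, Finset.sum_ite_eq]
    · rw [Prod.snd_sum]
      simp
  rw [hw, map_sum]
  unfold dotp
  refine Finset.sum_congr rfl fun i _ => ?_
  rw [ContinuousLinearMap.map_smul, smul_eq_mul, mul_comm]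

/-- The asymptotic slope of the energy term of the Ding functional along
the toric geodesic ray: `lim_{t→∞} (1/t) ∫_{P*} u_t* g dz = ∫_{P*} (φ − R) g dz`. -/
theorem statement2 (l : ℕ) (S : Set (Fin l → ℝ))
    (hScompact : IsCompact S) (hSconv : Convex ℝ S)
    (h0 : (0 : Fin l → ℝ) ∈ interior S)
    (A : Finset (Fin l → ℝ))
    (hA : (A : Set (Fin l → ℝ)) = S ∩ {z | ∀ i, ∃ m : ℤ, z i = (m : ℝ)})
    (hShull : S = convexHull ℝ (A : Set (Fin l → ℝ)))
    (g : (Fin l → ℝ) → ℝ) (hgcont : ContinuousOn g S)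
    (φ : (Fin l → ℝ) → ℝ) (hφ : IsPLConvexOn S φ) (R : ℝ) :
    Filter.Tendsto
      (fun t : ℝ => (1 / t) * ∫ z in S, legendre (geodesicRay S A φ R t) z * g z)
      Filter.atTop
      (nhds (∫ z in S, (φ z - R) * g z)) := by
  classical
  have h0S : (0 : Fin l → ℝ) ∈ S := interior_subset h0
  haveI : Nonempty ↥S := ⟨⟨0, h0S⟩⟩
  -- A is nonempty
  have hAne : A.Nonempty := by
    rw [← Finset.coe_nonempty]
    by_contra hem
    rw [Set.not_nonempty_iff_eq_empty] at hem
    rw [hem, convexHull_empty] at hShull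
    exact absurd (hShull ▸ h0S) (Set.notMem_empty _)
  obtain ⟨F, hF, hφF⟩ := hφ
  set ψ : (Fin l → ℝ) → ℝ := fun z => F.sup' hF (fun p => dotp p.1 z + p.2) with hψdef
  have hψcont : Continuous ψ := by
    rw [continuous_iff_continuousAt]
    intro x
    exact ContinuousAt.finset_sup'_apply hF fun p _ =>
      (((continuous_dotp p.1).add continuous_const).continuousAt)
  have hψeq : ∀ z ∈ S, φ z = ψ z := hφF
  -- convexity inequality for ψ
  have hψconv : ∀ p q : Fin l → ℝ, ∀ a b : ℝ, 0 ≤ a → 0 ≤ b → a + b = 1 →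
      ψ (a • p + b • q) ≤ a * ψ p + b * ψ q := by
    intro p q a b ha hb hab
    refine Finset.sup'_le _ _ fun c hc => ?_
    have h1 : dotp c.1 p + c.2 ≤ ψ p := Finset.le_sup' (fun p' => dotp p'.1 p + p'.2) hc
    have h2 : dotp c.1 q + c.2 ≤ ψ q := Finset.le_sup' (fun p' => dotp p'.1 q + p'.2) hc
    rw [dotp_lin]
    have hc2 : a * c.2 + b * c.2 = c.2 := by rw [← add_mul, hab, one_mul]
    linarith [mul_le_mul_of_nonneg_left h1 ha, mul_le_mul_of_nonneg_left h2 hb]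
  -- the support bound : dotp y w ≤ uPfun A y for w ∈ S
  have hsupp : ∀ (y : Fin l → ℝ), ∀ w ∈ S, dotp y w ≤ uPfun A y := by
    intro y w hw
    have hw' : w ∈ convexHull ℝ (A : Set (Fin l → ℝ)) := hShull ▸ hw
    set M := A.sup' hAne (fun a => dotp y a) with hM
    have hmem : w ∈ {v : Fin l → ℝ | dotp y v ≤ M} := by
      refine convexHull_min ?_ ?_ hw'
      · intro a ha
        exact Finset.le_sup' (fun a => dotp y a) ha
      · intro v1 hv1 v2 hv2 a b ha hb hab
        simp only [Set.mem_setOf_eq] at *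
        rw [dotp_lin]
        have hs : a * M + b * M = M := by rw [← add_mul, hab, one_mul]
        linarith [mul_le_mul_of_nonneg_left hv1 ha, mul_le_mul_of_nonneg_left hv2 hb]
    obtain ⟨a, haA, haM⟩ := Finset.exists_mem_eq_sup' hAne (fun a => dotp y a)
    have hsum_pos : 0 < ∑ b ∈ A, Real.exp (dotp b y) :=
      Finset.sum_pos (fun _ _ => Real.exp_pos _) hAne
    have hexp : Real.exp (dotp a y) ≤ ∑ b ∈ A, Real.exp (dotp b y) :=
      Finset.single_le_sum (f := fun b => Real.exp (dotp b y))
        (fun b _ => (Real.exp_pos _).le) haA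
    calc dotp y w ≤ M := hmem
      _ = dotp y a := haM
      _ = dotp a y := dotp_comm' y a
      _ ≤ uPfun A y := by
          rw [uPfun, Real.le_log_iff_exp_le hsum_pos]
          exact hexp
  -- boundedness of the legendre family of uPfun
  have hbdd : ∀ w ∈ S, BddAbove (Set.range fun y => dotp y w - uPfun A y) := by
    intro w hw
    refine ⟨0, ?_⟩
    rintro x ⟨y, rfl⟩
    exact sub_nonpos.2 (hsupp y w hw)
  have hle0 : ∀ w ∈ S, legendre (uPfun A) w ≤ 0 := by
    intro w hw
    exact ciSup_le fun y => sub_nonpos.2 (hsupp y w hw)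
  have hlb : ∀ w ∈ S, -Real.log A.card ≤ legendre (uPfun A) w := by
    intro w hw
    have h0t : dotp 0 w - uPfun A 0 = -Real.log A.card := by
      have h1 : dotp (0 : Fin l → ℝ) w = 0 := by simp [dotp]
      have h2 : uPfun A (0 : Fin l → ℝ) = Real.log A.card := by
        unfold uPfun
        have : ∀ a ∈ A, Real.exp (dotp a (0 : Fin l → ℝ)) = 1 := by
          intro a _
          simp [dotp]
        rw [Finset.sum_congr rfl this]
        simp
      rw [h1, h2]; ring
    exact h0t ▸ le_ciSup (hbdd w hw) 0
  have hlogcard : (0:ℝ) ≤ Real.log A.card := by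
    apply Real.log_nonneg
    exact_mod_cast hAne.card_pos
  -- convexity of legendre (uPfun A) on S
  have huconv : ∀ p ∈ S, ∀ q ∈ S, ∀ a b : ℝ, 0 ≤ a → 0 ≤ b → a + b = 1 →
      legendre (uPfun A) (a • p + b • q) ≤
        a * legendre (uPfun A) p + b * legendre (uPfun A) q := by
    intro p hp q hq a b ha hb hab
    refine ciSup_le fun y => ?_
    rw [dotp_lin]
    have h1 : dotp y p - uPfun A y ≤ legendre (uPfun A) p := le_ciSup (hbdd p hp) y
    have h2 : dotp y q - uPfun A y ≤ legendre (uPfun A) q := le_ciSup (hbdd q hq) y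
    have hu : a * uPfun A y + b * uPfun A y = uPfun A y := by rw [← add_mul, hab, one_mul]
    linarith [mul_le_mul_of_nonneg_left h1 ha, mul_le_mul_of_nonneg_left h2 hb]
  -- bounds for ψ on S
  obtain ⟨mψ, hmψ⟩ : ∃ m : ℝ, ∀ w ∈ S, m ≤ ψ w := by
    obtain ⟨m, hm⟩ := (hScompact.bddBelow_image hψcont.continuousOn)
    exact ⟨m, fun w hw => hm (Set.mem_image_of_mem ψ hw)⟩
  have hdotbdd : ∀ y : Fin l → ℝ, ∃ M : ℝ, ∀ w ∈ S, dotp y w ≤ M := by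
    intro y
    obtain ⟨M, hM⟩ := (hScompact.bddAbove_image (continuous_dotp y).continuousOn)
    exact ⟨M, fun w hw => hM (Set.mem_image_of_mem _ hw)⟩
  ---------------------------------------------------------------------------
  -- KEY: legendre of the geodesic ray equals  uP* + t (φ - R)  on S, t ≥ 0
  ---------------------------------------------------------------------------
  have hkey : ∀ t : ℝ, 0 ≤ t → ∀ z ∈ S,
      legendre (geodesicRay S A φ R t) z
        = legendre (uPfun A) z + t * (φ z - R) := by
    intro t ht z hz
    set f' : (Fin l → ℝ) → ℝ := fun w => legendre (uPfun A) w + t * (ψ w - R) with hf'def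
    have hgr : ∀ y, geodesicRay S A φ R t y
        = ⨆ w : S, (dotp y (w : Fin l → ℝ) - f' (w : Fin l → ℝ)) := by
      intro y
      unfold geodesicRay
      refine congrArg iSup (funext fun w => ?_)
      rw [hψeq w w.2]
      simp only [hf'def]
      ring
    -- boundedness of the geodesic ray family
    have hgrbdd : ∀ y, BddAbove (Set.range fun w : S =>
        dotp y (w : Fin l → ℝ) - f' (w : Fin l → ℝ)) := by
      intro y
      obtain ⟨M, hM⟩ := hdotbdd y
      refine ⟨M + Real.log A.card + t * R - t * mψ, ?_⟩
      rintro x ⟨w, rfl⟩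
      have h1 := hM w w.2
      have h2 := hlb w w.2
      have h3 := hmψ w w.2
      simp only [hf'def]
      linarith [mul_le_mul_of_nonneg_left h3 ht]
    have hgrle : ∀ y, ∀ w ∈ S,
        dotp y w - f' w ≤ geodesicRay S A φ R t y := by
      intro y w hw
      rw [hgr y]
      exact le_ciSup (hgrbdd y) ⟨w, hw⟩
    -- upper bound for the biconjugate
    have hterm : ∀ y, dotp y z - geodesicRay S A φ R t y ≤ f' z := by
      intro y
      have := hgrle y z hz
      linarith
    have hlegbdd : BddAbove (Set.range fun y =>
        dotp y z - geodesicRay S A φ R t y) := by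
      refine ⟨f' z, ?_⟩
      rintro x ⟨y, rfl⟩
      exact hterm y
    have hupper : legendre (geodesicRay S A φ R t) z ≤ f' z :=
      ciSup_le hterm
    -- convexity of f' on S
    have hf'conv : ∀ p ∈ S, ∀ q ∈ S, ∀ a b : ℝ, 0 ≤ a → 0 ≤ b → a + b = 1 →
        f' (a • p + b • q) ≤ a * f' p + b * f' q := by
      intro p hp q hq a b ha hb hab
      have h1 := huconv p hp q hq a b ha hb hab
      have h2 := hψconv p q a b ha hb hab
      simp only [hf'def]
      have hR : a * (t * R) + b * (t * R) = t * R := by rw [← add_mul, hab, one_mul]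
      linarith [mul_le_mul_of_nonneg_left h2 ht, hR]
    -- lower bound via Hahn-Banach separation of the epigraph
    have hlower : ∀ ε : ℝ, 0 < ε →
        f' z - ε ≤ legendre (geodesicRay S A φ R t) z := by
      intro ε hε
      set E : Set ((Fin l → ℝ) × ℝ) := {p | p.1 ∈ S ∧ f' p.1 ≤ p.2} with hEdef
      have hEconv : Convex ℝ E := by
        intro p hp q hq a b ha hb hab
        have hp1 : p.1 ∈ S := hp.1
        have hq1 : q.1 ∈ S := hq.1
        constructor
        · show (a • p + b • q).1 ∈ S
          simp only [Prod.fst_add, Prod.smul_fst]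
          exact hSconv hp1 hq1 ha hb hab
        · show f' ((a • p + b • q).1) ≤ (a • p + b • q).2
          simp only [Prod.fst_add, Prod.smul_fst, Prod.snd_add, Prod.smul_snd, smul_eq_mul]
          calc f' (a • p.1 + b • q.1) ≤ a * f' p.1 + b * f' q.1 :=
                hf'conv p.1 hp1 q.1 hq1 a b ha hb hab
            _ ≤ a * p.2 + b * q.2 := by
                linarith [mul_le_mul_of_nonneg_left hp.2 ha,
                  mul_le_mul_of_nonneg_left hq.2 hb]
      have hEeq : E = {p : (Fin l → ℝ) × ℝ | p.1 ∈ S} ∩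
          ⋂ y : Fin l → ℝ,
            {p : (Fin l → ℝ) × ℝ | dotp y p.1 - uPfun A y + t * (ψ p.1 - R) ≤ p.2} := by
        ext p
        simp only [hEdef, Set.mem_setOf_eq, Set.mem_inter_iff, Set.mem_iInter]
        constructor
        · rintro ⟨h1, h2⟩
          refine ⟨h1, fun y => ?_⟩
          have h3 : dotp y p.1 - uPfun A y ≤ legendre (uPfun A) p.1 :=
            le_ciSup (hbdd p.1 h1) y
          simp only [hf'def] at h2
          linarith
        · rintro ⟨h1, h2⟩
          refine ⟨h1, ?_⟩
          simp only [hf'def]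
          have h3 : legendre (uPfun A) p.1 ≤ p.2 - t * (ψ p.1 - R) :=
            ciSup_le fun y => by linarith [h2 y]
          linarith
      have hEclosed : IsClosed E := by
        rw [hEeq]
        refine IsClosed.inter (hScompact.isClosed.preimage continuous_fst) ?_
        refine isClosed_iInter fun y => ?_
        exact isClosed_le
          (((continuous_dotp y).comp continuous_fst).sub continuous_const |>.add
            (continuous_const.mul ((hψcont.comp continuous_fst).sub continuous_const)))
          continuous_snd
      have hznotin : ((z, f' z - ε) : (Fin l → ℝ) × ℝ) ∉ E := by
        rintro ⟨-, h2⟩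
        simp only at h2
        linarith
      obtain ⟨L, u, hLx, hLE⟩ := geometric_hahn_banach_point_closed hEconv hEclosed hznotin
      set α : ℝ := L ((0 : Fin l → ℝ), (1:ℝ)) with hαdef
      have hL : ∀ (w : Fin l → ℝ) (r : ℝ), L (w, r) = L (w, 0) + r * α := by
        intro w r
        have h1 : ((w, r) : (Fin l → ℝ) × ℝ)
            = (w, (0:ℝ)) + r • ((0 : Fin l → ℝ), (1:ℝ)) := by
          simp [Prod.ext_iff]
        rw [h1, map_add, L.map_smul, smul_eq_mul, ← hαdef]
      -- membership of points of the graph of f' over S in E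
      have hmemE : ∀ w ∈ S, ((w, f' w) : (Fin l → ℝ) × ℝ) ∈ E := fun w hw => ⟨hw, le_rfl⟩
      have hz1 : u < L (z, 0) + f' z * α := by
        have := hLE (z, f' z) (hmemE z hz)
        rwa [hL] at this
      have hx1 : L (z, 0) + (f' z - ε) * α < u := by
        have := hLx
        rwa [hL] at this
      have hαpos : 0 < α := by
        by_contra hcon
        push_neg at hcon
        have : ε * α ≤ 0 := mul_nonpos_of_nonneg_of_nonpos hε.le hcon
        nlinarith [hz1, hx1]
      set y₀ : Fin l → ℝ := fun i => L (Pi.single i 1, 0) with hy₀def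
      have hLw : ∀ w : Fin l → ℝ, L (w, 0) = dotp y₀ w := fun w => clm_fst_eq_dotp L w
      set y₁ : Fin l → ℝ := (-(α⁻¹)) • y₀ with hy₁def
      have hy₁ : ∀ w : Fin l → ℝ, dotp y₁ w = -(α⁻¹) * dotp y₀ w :=
        fun w => dotp_smul' _ _ _
      -- ε-subgradient inequality
      have hsub : ∀ w ∈ S, f' z - ε + dotp y₁ w - dotp y₁ z ≤ f' w := by
        intro w hw
        have h2 : u < L (w, 0) + f' w * α := by
          have := hLE (w, f' w) (hmemE w hw)
          rwa [hL] at this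
        have h3 : dotp y₀ z + (f' z - ε) * α < dotp y₀ w + f' w * α := by
          rw [← hLw, ← hLw]
          linarith
        have h4 : (dotp y₀ z - dotp y₀ w) / α < f' w - (f' z - ε) :=
          (div_lt_iff₀ hαpos).2 (by linarith)
        have h5 : (dotp y₀ z - dotp y₀ w) / α
            = -(α⁻¹) * dotp y₀ w - -(α⁻¹) * dotp y₀ z := by
          rw [div_eq_mul_inv]; ring
        rw [h5] at h4
        rw [hy₁ w, hy₁ z]
        linarith
      -- conclude the lower bound
      have hut : geodesicRay S A φ R t y₁ ≤ dotp y₁ z - (f' z - ε) := by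
        rw [hgr y₁]
        refine ciSup_le fun w => ?_
        have := hsub w w.2
        linarith
      have hfinal : dotp y₁ z - geodesicRay S A φ R t y₁
          ≤ legendre (geodesicRay S A φ R t) z := le_ciSup hlegbdd y₁
      linarith
    have h1 : f' z ≤ legendre (geodesicRay S A φ R t) z := by
      by_contra hcon
      push_neg at hcon
      have hd := hlower ((f' z - legendre (geodesicRay S A φ R t) z) / 2)
        (div_pos (sub_pos.mpr hcon) two_pos)
      rw [sub_div] at hd
      simp only [hf'def] at hd hcon
      linarith
    have heq : legendre (geodesicRay S A φ R t) z = f' z := le_antisymm hupper h1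
    rw [heq, hf'def]
    simp only
    rw [hψeq z hz]
  ---------------------------------------------------------------------------
  -- Integral identity and the limit
  ---------------------------------------------------------------------------
  have hSmeas : MeasurableSet S := hScompact.isClosed.measurableSet
  have hfront : volume (frontier S) = 0 := hSconv.addHaar_frontier volume
  have hae : (interior S : Set (Fin l → ℝ)) =ᵐ[volume] S :=
    interior_ae_eq_of_null_frontier hfront
  have hφc : ContinuousOn φ S := hψcont.continuousOn.congr hψeq
  have hD_int : IntegrableOn (fun z => (φ z - R) * g z) S volume :=
    ((hφc.sub continuousOn_const).mul hgcont).integrableOn_compact' hScompact hSmeas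
  -- continuity of the legendre dual of uPfun on the interior
  have huconv' : ConvexOn ℝ (interior S) (legendre (uPfun A)) := by
    refine ⟨hSconv.interior, ?_⟩
    intro p hp q hq a b ha hb hab
    simp only [smul_eq_mul]
    exact huconv p (interior_subset hp) q (interior_subset hq) a b ha hb hab
  have huStar_cont : ContinuousOn (legendre (uPfun A)) (interior S) :=
    huconv'.continuousOn isOpen_interior
  obtain ⟨Cg, hCg⟩ : ∃ C : ℝ, ∀ w ∈ S, ‖g w‖ ≤ C :=
    hScompact.exists_bound_of_continuousOn hgcont
  have hCg0 : (0:ℝ) ≤ Cg := le_trans (norm_nonneg _) (hCg 0 h0S)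
  have hfin : volume (interior S) < ⊤ :=
    lt_of_le_of_lt (measure_mono interior_subset) hScompact.measure_lt_top
  have hC_int : IntegrableOn (fun z => legendre (uPfun A) z * g z) (interior S) volume := by
    have haesm : AEStronglyMeasurable (fun z => legendre (uPfun A) z * g z)
        (volume.restrict (interior S)) :=
      (huStar_cont.mul (hgcont.mono interior_subset)).aestronglyMeasurable
        isOpen_interior.measurableSet
    have hconst : IntegrableOn (fun _ : Fin l → ℝ => Real.log A.card * Cg)
        (interior S) volume := integrableOn_const hfin.ne
    refine hconst.mono' haesm ?_
    rw [ae_restrict_iff' isOpen_interior.measurableSet]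
    refine Filter.Eventually.of_forall fun w hw => ?_
    have hwS : w ∈ S := interior_subset hw
    have h1 : |legendre (uPfun A) w| ≤ Real.log A.card := by
      rw [abs_le]
      exact ⟨hlb w hwS, le_trans (hle0 w hwS) hlogcard⟩
    have h2 : ‖g w‖ ≤ Cg := hCg w hwS
    rw [norm_mul]
    calc ‖legendre (uPfun A) w‖ * ‖g w‖ ≤ Real.log A.card * Cg := by
          apply mul_le_mul h1 h2 (norm_nonneg _) hlogcard
      _ = Real.log A.card * Cg := rfl
  set C : ℝ := ∫ z in interior S, legendre (uPfun A) z * g z with hCdef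
  set D : ℝ := ∫ z in S, (φ z - R) * g z with hDdef
  have hint_eq : ∀ t : ℝ, 0 ≤ t →
      (∫ z in S, legendre (geodesicRay S A φ R t) z * g z) = C + t * D := by
    intro t ht
    have e1 : (∫ z in S, legendre (geodesicRay S A φ R t) z * g z)
        = ∫ z in interior S, legendre (geodesicRay S A φ R t) z * g z :=
      (setIntegral_congr_set hae).symm
    have e2 : (∫ z in interior S, legendre (geodesicRay S A φ R t) z * g z)
        = ∫ z in interior S,
            (legendre (uPfun A) z * g z + t * ((φ z - R) * g z)) := by
      refine setIntegral_congr_fun isOpen_interior.measurableSet fun w hw => ?_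
      rw [hkey t ht w (interior_subset hw)]
      ring
    have hD_int' : IntegrableOn (fun z => t * ((φ z - R) * g z)) (interior S) volume :=
      (hD_int.mono_set interior_subset).const_mul t
    have e3 : (∫ z in interior S,
          (legendre (uPfun A) z * g z + t * ((φ z - R) * g z)))
        = C + t * ∫ z in interior S, (φ z - R) * g z := by
      rw [integral_add hC_int hD_int', integral_const_mul]
    have e4 : (∫ z in interior S, (φ z - R) * g z) = D :=
      setIntegral_congr_set hae
    rw [e1, e2, e3, e4]
  -- conclusion
  have hev : (fun t : ℝ => C * t⁻¹ + D) =ᶠ[atTop]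
      fun t : ℝ => (1 / t) * ∫ z in S, legendre (geodesicRay S A φ R t) z * g z := by
    filter_upwards [eventually_ge_atTop (1:ℝ)] with t ht1
    have ht0 : t ≠ 0 := by linarith
    rw [hint_eq t (by linarith)]
    field_simp
  have hlim : Tendsto (fun t : ℝ => C * t⁻¹ + D) atTop (nhds (C * 0 + D)) :=
    ((tendsto_inv_atTop_zero).const_mul C).add_const D
  rw [mul_zero, zero_add] at hlim
  exact hlim.congr' hev

end
end

section
/- Let P* ⊂ ℝ^l be a compact convex polytope with 0 in its interior and let h, g : P* → ℝ be continuous and strictly positive. Then the following are equivalent: (i) there exists λ > 0 such that 𝔇_g(φ) ≥ λ·J_h(φ̂) for every piecewise linear convex function φ : P* → ℝ (a maximum of finitely many affine functions), where φ̂(y) := sup_{z ∈ P*}( ⟨y,z⟩ − φ(z) ) (i.e. the manifold is fiber-directed uniformly relative D-stable); (ii) ∫_{P*} z_k g(z) dz = 0 for every k = 1, …, l. -/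
open MeasureTheory Real Set Filter

noncomputable section

variable {l : ℕ}

lemma dotp_cont (a : Fin l → ℝ) : Continuous (fun z => dotp a z) := by
  unfold dotp
  exact continuous_finset_sum _ (fun i _ => continuous_const.mul (continuous_apply i))

lemma dotp_zero (a : Fin l → ℝ) : dotp a 0 = 0 := by simp [dotp]

lemma dotp_single (k : Fin l) (c : ℝ) (z : Fin l → ℝ) :
    dotp (Pi.single k c) z = c * z k := by
  unfold dotp
  rw [Finset.sum_eq_single k] <;> simp +contextual [Pi.single_apply]

/-- Legendre transform of the hat function of a PL convex function recovers it on `S`. -/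
lemma legendre_hat (S : Set (Fin l → ℝ)) (hS : IsCompact S) (hne : S.Nonempty)
    (φ : (Fin l → ℝ) → ℝ) (F : Finset ((Fin l → ℝ) × ℝ)) (hF : F.Nonempty)
    (hφ : ∀ z ∈ S, φ z = F.sup' hF (fun p => dotp p.1 z + p.2))
    {z : Fin l → ℝ} (hz : z ∈ S) :
    legendre (fun y => ⨆ w : S, (dotp y (w : Fin l → ℝ) - φ (w : Fin l → ℝ))) z = φ z := by
  haveI : Nonempty S := hne.to_subtype
  set Φ : (Fin l → ℝ) → ℝ := fun w => F.sup' hF (fun p => dotp p.1 w + p.2) with hΦ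
  have hΦc : Continuous Φ :=
    Continuous.finset_sup'_apply hF (fun p _ => (dotp_cont p.1).add continuous_const)
  set u : (Fin l → ℝ) → ℝ := fun y => ⨆ w : S, (dotp y (w : Fin l → ℝ) - φ (w : Fin l → ℝ))
    with hu
  have hbdd : ∀ y : Fin l → ℝ, BddAbove (Set.range fun w : S => dotp y (w : Fin l → ℝ) - φ w) := by
    intro y
    obtain ⟨C, hC⟩ := hS.bddAbove_image ((dotp_cont y).sub hΦc).continuousOn
    refine ⟨C, ?_⟩
    rintro _ ⟨w, rfl⟩
    have hw : dotp y (w : Fin l → ℝ) - φ w = dotp y (w : Fin l → ℝ) - Φ w := by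
      rw [hφ w w.2]
    show dotp y (w : Fin l → ℝ) - φ w ≤ C
    rw [hw]
    exact hC (Set.mem_image_of_mem _ w.2)
  have hle : ∀ y : Fin l → ℝ, ∀ w ∈ S, dotp y w - φ w ≤ u y := by
    intro y w hw
    exact le_ciSup (hbdd y) ⟨w, hw⟩
  have hup : ∀ y : Fin l → ℝ, dotp y z - u y ≤ φ z := by
    intro y
    have := hle y z hz
    linarith
  have hbdd2 : BddAbove (Set.range fun y : Fin l → ℝ => dotp y z - u y) := by
    refine ⟨φ z, ?_⟩
    rintro _ ⟨y, rfl⟩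
    exact hup y
  obtain ⟨p, hpF, hp⟩ := Finset.exists_mem_eq_sup' hF (fun q => dotp q.1 z + q.2)
  have hφz : φ z = dotp p.1 z + p.2 := by rw [hφ z hz, hp]
  have hub : u p.1 ≤ -p.2 := by
    refine ciSup_le (fun w => ?_)
    have h1 : dotp p.1 (w : Fin l → ℝ) + p.2 ≤ φ w := by
      rw [hφ w w.2]
      exact Finset.le_sup' (fun q => dotp q.1 (w : Fin l → ℝ) + q.2) hpF
    linarith
  have hlow : φ z ≤ legendre u z := by
    have : φ z ≤ dotp p.1 z - u p.1 := by rw [hφz]; linarith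
    exact le_trans this (le_ciSup hbdd2 p.1)
  exact le_antisymm (ciSup_le hup) hlow

/-- Positivity of the integral of a positive continuous function on a compact set
with nonempty interior. -/
lemma integral_pos_aux (S : Set (Fin l → ℝ)) (hS : IsCompact S)
    (h0 : (0 : Fin l → ℝ) ∈ interior S)
    (g : (Fin l → ℝ) → ℝ) (hgc : ContinuousOn g S) (hgp : ∀ z ∈ S, 0 < g z) :
    0 < ∫ z in S, g z := by
  have hSm : MeasurableSet S := hS.isClosed.measurableSet
  have hne : S.Nonempty := ⟨0, interior_subset h0⟩
  obtain ⟨z0, hz0, hmin⟩ := hS.exists_isMinOn hne hgc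
  have hvpos : 0 < volume S :=
    lt_of_lt_of_le (isOpen_interior.measure_pos volume ⟨0, h0⟩) (measure_mono interior_subset)
  have hvfin : volume S ≠ ⊤ := hS.measure_lt_top.ne
  calc (0:ℝ) < (volume S).toReal * g z0 :=
        mul_pos (ENNReal.toReal_pos hvpos.ne' hvfin) (hgp z0 hz0)
    _ = ∫ _ in S, g z0 := by rw [setIntegral_const, smul_eq_mul]; rfl
    _ ≤ ∫ z in S, g z := by
        refine setIntegral_mono_on (integrableOn_const hS.measure_lt_top.ne)
          (hgc.integrableOn_compact hS) hSm (fun x hx => hmin hx)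

/-- Each term in the `Jred` infimum is nonnegative. -/
lemma term_nonneg (S : Set (Fin l → ℝ)) (hS : IsCompact S) (hne : S.Nonempty)
    (h : (Fin l → ℝ) → ℝ) (hhc : ContinuousOn h S) (hhpos : ∀ z ∈ S, 0 ≤ h z)
    (hIh : 0 < ∫ z in S, h z)
    (f : (Fin l → ℝ) → ℝ) (hfc : ContinuousOn f S) :
    0 ≤ (∫ z in S, h z)⁻¹ * (∫ z in S, f z * h z) - sInf (f '' S) := by
  have hSm : MeasurableSet S := hS.isClosed.measurableSet
  set m := sInf (f '' S) with hm
  have hcomp : IsCompact (f '' S) := hS.image_of_continuousOn hfc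
  have hmle : ∀ x ∈ S, m ≤ f x := fun x hx =>
    csInf_le hcomp.bddBelow (Set.mem_image_of_mem f hx)
  have hint : (∫ z in S, m * h z) ≤ ∫ z in S, f z * h z := by
    refine setIntegral_mono_on ((hhc.integrableOn_compact hS).const_mul m)
      ((hfc.mul hhc).integrableOn_compact hS) hSm (fun x hx => ?_)
    exact mul_le_mul_of_nonneg_right (hmle x hx) (hhpos x hx)
  have hconst : (∫ z in S, m * h z) = m * ∫ z in S, h z := integral_const_mul m _
  have h1 : m * (∫ z in S, h z) ≤ ∫ z in S, f z * h z := by rw [← hconst]; exact hint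
  have h2 : m ≤ (∫ z in S, h z)⁻¹ * (∫ z in S, f z * h z) := by
    have h3 := mul_le_mul_of_nonneg_left h1 (inv_nonneg.2 hIh.le)
    have h4 : (∫ z in S, h z)⁻¹ * (m * ∫ z in S, h z) = m := by
      field_simp
    linarith
  linarith

/-- Integral of an affine function times a weight. -/
lemma integral_affine_mul (S : Set (Fin l → ℝ)) (hS : IsCompact S)
    (ρ : (Fin l → ℝ) → ℝ) (hρc : ContinuousOn ρ S) (a : Fin l → ℝ) (b : ℝ) :
    ∫ z in S, (dotp a z + b) * ρ z
      = (∑ k, a k * ∫ z in S, z k * ρ z) + b * ∫ z in S, ρ z := by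
  have hSm : MeasurableSet S := hS.isClosed.measurableSet
  have h1 : ∀ k : Fin l, IntegrableOn (fun z => z k * ρ z) S volume := fun k =>
    ((continuous_apply k).continuousOn.mul hρc).integrableOn_compact hS
  have hρi : IntegrableOn ρ S volume := hρc.integrableOn_compact hS
  have e1 : ∫ z in S, (dotp a z + b) * ρ z
      = ∫ z in S, ((∑ k, a k * (z k * ρ z)) + b * ρ z) := by
    refine setIntegral_congr_fun hSm (fun z _ => ?_)
    unfold dotp
    rw [add_mul, Finset.sum_mul]
    congr 1
    exact Finset.sum_congr rfl (fun i _ => by ring)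
  rw [e1, integral_add (by exact integrable_finset_sum _ (fun k _ => (h1 k).const_mul (a k)))
      (hρi.const_mul b), integral_finset_sum _ (fun k _ => (h1 k).const_mul (a k))]
  simp only [integral_const_mul]


/-- uniform stability theorem of Section 5. Fiber-directed uniform
relative D-stability — `𝔇_g(φ) ≥ λ J_h(φ̂)` for all piecewise linear convex `φ` on `P*`,
where `φ̂(y) = sup_{z ∈ P*}(⟨y,z⟩ − φ(z))` — holds for some `λ > 0` if and only if the
`g`-weighted barycenter of `P*` vanishes. -/
theorem statement9 (l : ℕ) (S : Set (Fin l → ℝ))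
    (hScompact : IsCompact S) (hSconv : Convex ℝ S)
    (hSpoly : ∃ F : Finset (Fin l → ℝ), S = convexHull ℝ (F : Set (Fin l → ℝ)))
    (h0 : (0 : Fin l → ℝ) ∈ interior S)
    (h g : (Fin l → ℝ) → ℝ)
    (hhcont : ContinuousOn h S) (hhpos : ∀ z ∈ S, 0 < h z)
    (hgcont : ContinuousOn g S) (hgpos : ∀ z ∈ S, 0 < g z) :
    (∃ lam : ℝ, 0 < lam ∧
        ∀ φ : (Fin l → ℝ) → ℝ, IsPLConvexOn S φ →
          lam * Jred S h (fun y => ⨆ z : S, (dotp y (z : Fin l → ℝ) - φ (z : Fin l → ℝ)))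
            ≤ DingInv S g φ) ↔
      (∀ k : Fin l, ∫ z in S, z k * g z = 0) := by
  have hSm : MeasurableSet S := hScompact.isClosed.measurableSet
  have h0S : (0 : Fin l → ℝ) ∈ S := interior_subset h0
  have hne : S.Nonempty := ⟨0, h0S⟩
  have hIh : 0 < ∫ z in S, h z := integral_pos_aux S hScompact h0 h hhcont hhpos
  have hIg : 0 < ∫ z in S, g z := integral_pos_aux S hScompact h0 g hgcont hgpos
  -- every term in the Jred infimum is nonnegative, for PL convex φ
  have hterm : ∀ (φ : (Fin l → ℝ) → ℝ) (F : Finset ((Fin l → ℝ) × ℝ)) (hF : F.Nonempty),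
      (∀ z ∈ S, φ z = F.sup' hF fun p => dotp p.1 z + p.2) →
      ∀ ab : (Fin l → ℝ) × ℝ,
        0 ≤ (∫ z in S, h z)⁻¹ *
              (∫ z in S, (legendre (fun y => ⨆ z : S, (dotp y (z : Fin l → ℝ)
                  - φ (z : Fin l → ℝ))) z - (dotp ab.1 z + ab.2)) * h z)
            - sInf ((fun z => legendre (fun y => ⨆ z : S, (dotp y (z : Fin l → ℝ)
                  - φ (z : Fin l → ℝ))) z - (dotp ab.1 z + ab.2)) '' S) := by
    intro φ F hF hφ ab
    set f : (Fin l → ℝ) → ℝ :=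
      fun z => F.sup' hF (fun p => dotp p.1 z + p.2) - (dotp ab.1 z + ab.2) with hfdef
    have hΦc : Continuous fun w => F.sup' hF (fun p => dotp p.1 w + p.2) :=
      Continuous.finset_sup'_apply hF (fun p _ => (dotp_cont p.1).add continuous_const)
    have hfc : ContinuousOn f S :=
      (hΦc.sub ((dotp_cont ab.1).add continuous_const)).continuousOn
    have e0 : ∀ z ∈ S,
        legendre (fun y => ⨆ z : S, (dotp y (z : Fin l → ℝ) - φ (z : Fin l → ℝ))) z
          - (dotp ab.1 z + ab.2) = f z := by
      intro z hz
      rw [legendre_hat S hScompact hne φ F hF hφ hz, hφ z hz]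
    have e1 : ∫ z in S, (legendre (fun y => ⨆ z : S, (dotp y (z : Fin l → ℝ)
        - φ (z : Fin l → ℝ))) z - (dotp ab.1 z + ab.2)) * h z = ∫ z in S, f z * h z :=
      setIntegral_congr_fun hSm (fun z hz => by rw [e0 z hz])
    have e2 : ((fun z => legendre (fun y => ⨆ z : S, (dotp y (z : Fin l → ℝ)
        - φ (z : Fin l → ℝ))) z - (dotp ab.1 z + ab.2)) '' S) = f '' S :=
      Set.image_congr e0
    rw [e1, e2]
    exact term_nonneg S hScompact hne h hhcont (fun z hz => (hhpos z hz).le) hIh f hfc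
  constructor
  · rintro ⟨lam, hlam, hstab⟩ k
    have key : ∀ c : ℝ, 0 ≤ c * ∫ z in S, z k * g z := by
      intro c
      set a : Fin l → ℝ := Pi.single k c with hadef
      set φ : (Fin l → ℝ) → ℝ := fun z => dotp a z + 0 with hφdef
      have hφF : ∀ z ∈ S, φ z = ({(a, (0:ℝ))} : Finset ((Fin l → ℝ) × ℝ)).sup'
          ⟨(a, 0), Finset.mem_singleton_self _⟩ (fun p => dotp p.1 z + p.2) := by
        intro z hz
        simp [φ]
      have hPL : IsPLConvexOn S φ :=
        ⟨{(a, 0)}, ⟨(a, 0), Finset.mem_singleton_self _⟩, hφF⟩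
      have hJ : 0 ≤ Jred S h (fun y => ⨆ z : S, (dotp y (z : Fin l → ℝ)
          - φ (z : Fin l → ℝ))) := by
        unfold Jred
        exact Real.iInf_nonneg (hterm φ {(a, 0)} ⟨(a, 0), Finset.mem_singleton_self _⟩ hφF)
      have hD := hstab φ hPL
      have hsum : ∑ j, a j * ∫ z in S, z j * g z = c * ∫ z in S, z k * g z := by
        rw [Finset.sum_eq_single k]
        · rw [hadef, Pi.single_eq_same]
        · intro j _ hj
          rw [hadef, Pi.single_eq_of_ne hj, zero_mul]
        · intro hk
          exact absurd (Finset.mem_univ k) hk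
      have hDval : DingInv S g φ = (∫ z in S, g z)⁻¹ * (c * ∫ z in S, z k * g z) := by
        simp only [DingInv]
        rw [show (∫ z in S, φ z * g z) = ∫ z in S, (dotp a z + 0) * g z from rfl,
          integral_affine_mul S hScompact g hgcont a 0, hsum]
        have : φ 0 = 0 := by simp [φ, dotp]
        rw [this]
        ring
      have h1 : 0 ≤ (∫ z in S, g z)⁻¹ * (c * ∫ z in S, z k * g z) := by
        rw [← hDval]
        exact le_trans (mul_nonneg hlam.le hJ) hD
      by_contra hX
      push_neg at hX
      have := mul_neg_of_pos_of_neg (inv_pos.2 hIg) hX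
      linarith
    have k1 := key 1
    have k2 := key (-1)
    linarith
  · intro hbar
    obtain ⟨zg, hzgS, hzg⟩ := hScompact.exists_isMinOn hne hgcont
    obtain ⟨zh, hzhS, hzh⟩ := hScompact.exists_isMaxOn hne hhcont
    have hεg : 0 < g zg := hgpos zg hzgS
    have hMh : 0 < h zh := hhpos zh hzhS
    refine ⟨g zg * (∫ z in S, h z) / (h zh * (∫ z in S, g z)), by positivity, ?_⟩
    intro φ hPL
    obtain ⟨F, hF, hφ⟩ := hPL
    set Φ : (Fin l → ℝ) → ℝ := fun w => F.sup' hF (fun p => dotp p.1 w + p.2) with hΦdef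
    have hΦc : Continuous Φ :=
      Continuous.finset_sup'_apply hF (fun p _ => (dotp_cont p.1).add continuous_const)
    obtain ⟨p, hpF, hp0⟩ := Finset.exists_mem_eq_sup' hF (fun q => dotp q.1 (0 : Fin l → ℝ) + q.2)
    set ψ : (Fin l → ℝ) → ℝ := fun z => Φ z - (dotp p.1 z + p.2) with hψdef
    have hψc : Continuous ψ := hΦc.sub ((dotp_cont p.1).add continuous_const)
    have hψnn : ∀ z, 0 ≤ ψ z := fun z =>
      sub_nonneg.2 (Finset.le_sup' (fun q => dotp q.1 z + q.2) hpF)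
    have hψ0 : ψ 0 = 0 := by
      show Φ 0 - (dotp p.1 0 + p.2) = 0
      rw [hΦdef]
      exact sub_eq_zero_of_eq hp0
    have hψh_int : IntegrableOn (fun z => ψ z * h z) S volume :=
      (hψc.continuousOn.mul hhcont).integrableOn_compact hScompact
    have hψg_int : IntegrableOn (fun z => ψ z * g z) S volume :=
      (hψc.continuousOn.mul hgcont).integrableOn_compact hScompact
    -- Step A : Jred ≤ (∫h)⁻¹ ∫ ψ h
    have hA : Jred S h (fun y => ⨆ z : S, (dotp y (z : Fin l → ℝ) - φ (z : Fin l → ℝ)))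
        ≤ (∫ z in S, h z)⁻¹ * ∫ z in S, ψ z * h z := by
      have hbdd : BddBelow (Set.range fun ab : (Fin l → ℝ) × ℝ =>
          (∫ z in S, h z)⁻¹ *
              (∫ z in S, (legendre (fun y => ⨆ z : S, (dotp y (z : Fin l → ℝ)
                  - φ (z : Fin l → ℝ))) z - (dotp ab.1 z + ab.2)) * h z)
            - sInf ((fun z => legendre (fun y => ⨆ z : S, (dotp y (z : Fin l → ℝ)
                  - φ (z : Fin l → ℝ))) z - (dotp ab.1 z + ab.2)) '' S)) := by
        refine ⟨0, ?_⟩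
        rintro _ ⟨ab, rfl⟩
        exact hterm φ F hF hφ ab
      have h1 := ciInf_le hbdd (p.1, p.2)
      have e0 : ∀ z ∈ S,
          legendre (fun y => ⨆ z : S, (dotp y (z : Fin l → ℝ) - φ (z : Fin l → ℝ))) z
            - (dotp p.1 z + p.2) = ψ z := by
        intro z hz
        rw [legendre_hat S hScompact hne φ F hF hφ hz, hφ z hz]
      have e1 : ∫ z in S, (legendre (fun y => ⨆ z : S, (dotp y (z : Fin l → ℝ)
          - φ (z : Fin l → ℝ))) z - (dotp p.1 z + p.2)) * h z = ∫ z in S, ψ z * h z :=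
        setIntegral_congr_fun hSm (fun z hz => by rw [e0 z hz])
      have e2 : ((fun z => legendre (fun y => ⨆ z : S, (dotp y (z : Fin l → ℝ)
          - φ (z : Fin l → ℝ))) z - (dotp p.1 z + p.2)) '' S) = ψ '' S :=
        Set.image_congr e0
      have e3 : sInf (ψ '' S) = 0 := by
        refine le_antisymm ?_ (Real.sInf_nonneg ?_)
        · exact csInf_le ⟨0, by rintro _ ⟨z, _, rfl⟩; exact hψnn z⟩ ⟨0, h0S, hψ0⟩
        · rintro _ ⟨z, _, rfl⟩
          exact hψnn z
      calc Jred S h (fun y => ⨆ z : S, (dotp y (z : Fin l → ℝ) - φ (z : Fin l → ℝ)))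
          ≤ (∫ z in S, h z)⁻¹ *
              (∫ z in S, (legendre (fun y => ⨆ z : S, (dotp y (z : Fin l → ℝ)
                  - φ (z : Fin l → ℝ))) z - (dotp p.1 z + p.2)) * h z)
            - sInf ((fun z => legendre (fun y => ⨆ z : S, (dotp y (z : Fin l → ℝ)
                  - φ (z : Fin l → ℝ))) z - (dotp p.1 z + p.2)) '' S) := by
            unfold Jred
            exact h1
        _ = (∫ z in S, h z)⁻¹ * ∫ z in S, ψ z * h z := by rw [e1, e2, e3, sub_zero]
    -- Step B : DingInv φ = (∫g)⁻¹ ∫ ψ g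
    have hφ0 : φ 0 = dotp p.1 0 + p.2 := by rw [hφ 0 h0S]; exact hp0
    have hB : DingInv S g φ = (∫ z in S, g z)⁻¹ * ∫ z in S, ψ z * g z := by
      simp only [DingInv]
      have e4 : ∫ z in S, φ z * g z
          = ∫ z in S, (ψ z * g z + (dotp p.1 z + p.2) * g z) := by
        refine setIntegral_congr_fun hSm (fun z hz => ?_)
        rw [hφ z hz]
        show Φ z * g z = ψ z * g z + (dotp p.1 z + p.2) * g z
        rw [hψdef]
        ring
      have haff_int : IntegrableOn (fun z => (dotp p.1 z + p.2) * g z) S volume :=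
        ((((dotp_cont p.1).add continuous_const).continuousOn).mul hgcont).integrableOn_compact
          hScompact
      have e5 : ∑ j, p.1 j * ∫ z in S, z j * g z = 0 :=
        Finset.sum_eq_zero (fun j _ => by rw [hbar j, mul_zero])
      rw [e4, integral_add hψg_int haff_int, integral_affine_mul S hScompact g hgcont p.1 p.2,
        e5, hφ0, dotp_zero]
      have hIgne : (∫ z in S, g z) ≠ 0 := hIg.ne'
      field_simp
      ring
    -- Step C : comparison of the two weighted integrals
    have hC : (g zg / h zh) * ∫ z in S, ψ z * h z ≤ ∫ z in S, ψ z * g z := by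
      have hmono : ∫ z in S, (g zg / h zh) * (ψ z * h z) ≤ ∫ z in S, ψ z * g z := by
        refine setIntegral_mono_on (hψh_int.const_mul _) hψg_int hSm (fun x hx => ?_)
        have h1 : h x ≤ h zh := isMaxOn_iff.mp hzh x hx
        have h2 : g zg ≤ g x := isMinOn_iff.mp hzg x hx
        have hch : g zg / h zh * h x ≤ g zg := by
          rw [div_mul_eq_mul_div, div_le_iff₀ hMh]
          nlinarith [hhpos x hx]
        have h4 : ψ x * (g zg / h zh * h x) ≤ ψ x * g x :=
          mul_le_mul_of_nonneg_left (le_trans hch h2) (hψnn x)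
        nlinarith [h4]
      rwa [integral_const_mul] at hmono
    rw [hB]
    have hIhne : (∫ z in S, h z) ≠ 0 := hIh.ne'
    have hIgne : (∫ z in S, g z) ≠ 0 := hIg.ne'
    calc g zg * (∫ z in S, h z) / (h zh * ∫ z in S, g z)
          * Jred S h (fun y => ⨆ z : S, (dotp y (z : Fin l → ℝ) - φ (z : Fin l → ℝ)))
        ≤ g zg * (∫ z in S, h z) / (h zh * ∫ z in S, g z)
            * ((∫ z in S, h z)⁻¹ * ∫ z in S, ψ z * h z) :=
          mul_le_mul_of_nonneg_left hA (by positivity)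
      _ = (∫ z in S, g z)⁻¹ * ((g zg / h zh) * ∫ z in S, ψ z * h z) := by
          field_simp
      _ ≤ (∫ z in S, g z)⁻¹ * ∫ z in S, ψ z * g z :=
          mul_le_mul_of_nonneg_left hC (inv_nonneg.2 hIg.le)

end
end
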